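/- arXiv:2503.07696 — 4 statements merged into one kernel-verified Lean document; each statement's English description precedes it below -/
import Mathlib

section
/- Let p be a monic polynomial of degree n ≥ 2 over ℂ with n distinct roots, all lying on the unit circle. If μ is a root of p, then the real part of μ · p''(μ)/p'(μ) equals n - 1. -/
/-!
Write `p = (X - μ) q`. Then `p'(μ) = q(μ)` and `p''(μ) = 2 q'(μ)`, so
`μ p''(μ) / p'(μ) = Σ_ν 2μ / (μ - ν)` over the other roots `ν` of `p`.
For distinct points `μ, ν` of a circle about `0`, the vectors `μ + ν` and `μ - ν` are
orthogonal, so `μ / (μ - ν)` lies on the line `Re = 1/2`: each of the `n - 1` terms has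
real part `1`.
-/

open Polynomial

namespace Polynomial

variable {R : Type*} [CommRing R]

theorem eval_derivative_X_sub_C_mul (a : R) (q : R[X]) :
    (derivative ((X - C a) * q)).eval a = q.eval a := by
  simp [derivative_mul]

theorem eval_derivative_derivative_X_sub_C_mul (a : R) (q : R[X]) :
    (derivative (derivative ((X - C a) * q))).eval a = 2 * (derivative q).eval a := by
  simp only [derivative_mul, derivative_sub, derivative_X, derivative_C, sub_zero, one_mul,
    derivative_add, zero_mul, eval_add, eval_mul, eval_sub, eval_X, eval_C, sub_self]
  ring

end Polynomial

namespace Complex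

theorem re_div_sub_of_norm_eq {μ ν : ℂ} (h : ‖μ‖ = ‖ν‖) (hne : μ ≠ ν) :
    (μ / (μ - ν)).re = 1 / 2 := by
  have hsq : normSq μ = normSq ν := by rw [← Complex.sq_norm, ← Complex.sq_norm, h]
  have hd : normSq (μ - ν) ≠ 0 := (normSq_pos.mpr (sub_ne_zero.mpr hne)).ne'
  rw [normSq_apply, normSq_apply] at hsq
  rw [div_re, ← add_div, div_eq_iff hd, normSq_apply, sub_re, sub_im]
  linear_combination (1 / 2 : ℝ) * hsq

theorem re_multiset_sum (s : Multiset ℂ) : s.sum.re = (s.map re).sum :=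
  map_multiset_sum reAddGroupHom s

end Complex

theorem re_mul_eval_derivative_derivative_div_of_roots_norm_eq {μ : ℂ} {q : ℂ[X]}
    (hq : q.eval μ ≠ 0) (hroots : ∀ ν ∈ q.roots, ‖ν‖ = ‖μ‖) :
    (μ * (derivative (derivative ((X - C μ) * q))).eval μ /
      (derivative ((X - C μ) * q)).eval μ).re = q.roots.card := by
  have hsum : μ * (derivative (derivative ((X - C μ) * q))).eval μ /
      (derivative ((X - C μ) * q)).eval μ = 2 * (q.roots.map fun ν ↦ μ / (μ - ν)).sum := by
    rw [eval_derivative_derivative_X_sub_C_mul, eval_derivative_X_sub_C_mul, mul_left_comm,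
      mul_div_assoc, mul_div_assoc, (IsAlgClosed.splits q).eval_derivative_div_eval_of_ne_zero hq,
      ← Multiset.sum_map_mul_left]
    simp only [mul_one_div]
  have hterm : ∀ ν ∈ q.roots, (μ / (μ - ν)).re = 1 / 2 := fun ν hν ↦
    Complex.re_div_sub_of_norm_eq (hroots ν hν).symm fun h ↦ hq (h ▸ (mem_roots'.mp hν).2)
  have hre : (q.roots.map fun ν ↦ μ / (μ - ν)).sum.re = q.roots.card * (1 / 2) := by
    rw [Complex.re_multiset_sum, Multiset.map_map, Function.comp_def,
      Multiset.map_congr rfl hterm, Multiset.map_const', Multiset.sum_replicate, nsmul_eq_mul]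
  simp only [hsum, Complex.mul_re, Complex.re_ofNat, Complex.im_ofNat, hre, zero_mul, sub_zero]
  ring

theorem stmt_4_general (n : ℕ) (p : Polynomial ℂ) (hmonic : p.Monic)
    (hdeg : p.natDegree = n) (hsimple : p.roots.Nodup)
    (hcircle : ∀ μ ∈ p.roots, ‖μ‖ = 1)
    (μ : ℂ) (hμ : p.eval μ = 0) :
    (μ * (Polynomial.derivative (Polynomial.derivative p)).eval μ /
      (Polynomial.derivative p).eval μ).re = n - 1 := by
  set q := p /ₘ (X - C μ)
  have hfactor : (X - C μ) * q = p := mul_divByMonic_eq_iff_isRoot.mpr hμ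
  have hp0 : (X - C μ) * q ≠ 0 := hfactor ▸ hmonic.ne_zero
  have hroots : p.roots = μ ::ₘ q.roots := by
    rw [← hfactor, roots_mul hp0, roots_X_sub_C, Multiset.singleton_add]
  have hcard : q.roots.card + 1 = n := by
    rw [← hdeg, ← splits_iff_card_roots.mp (IsAlgClosed.splits p), hroots, Multiset.card_cons]
  have hqμ : q.eval μ ≠ 0 := by
    rw [hroots, Multiset.nodup_cons] at hsimple
    exact fun h ↦ hsimple.1 ((mem_roots (right_ne_zero_of_mul hp0)).mpr h)
  have hqcircle : ∀ ν ∈ q.roots, ‖ν‖ = ‖μ‖ := fun ν hν ↦ by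
    rw [hcircle ν (hroots ▸ Multiset.mem_cons_of_mem hν),
      hcircle μ (hroots ▸ Multiset.mem_cons_self μ _)]
  rw [← hfactor, re_mul_eval_derivative_derivative_div_of_roots_norm_eq hqμ hqcircle, ← hcard]
  push_cast
  ring

theorem stmt_4 (n : ℕ) (hn : 2 ≤ n) (p : Polynomial ℂ) (hmonic : p.Monic)
    (hdeg : p.natDegree = n) (hsimple : p.roots.Nodup)
    (hcircle : ∀ μ ∈ p.roots, ‖μ‖ = 1)
    (μ : ℂ) (hμ : p.eval μ = 0) :
    (μ * (Polynomial.derivative (Polynomial.derivative p)).eval μ /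
      (Polynomial.derivative p).eval μ).re = n - 1 :=
  stmt_4_general n p hmonic hdeg hsimple hcircle μ hμ
end

section
/- Let p be a polynomial of degree n ≥ 1 over ℂ whose roots μ_1, …, μ_n (with multiplicity) all lie in the closed unit disk. Then for every z on the unit circle with p(z) ≠ 0, the real part of z·p'(z)/p(z) is at least n/2. -/
/-!
Factoring `p = c ∏ (X - μᵢ)` over its roots, the logarithmic derivative gives
`z p'(z) / p(z) = ∑ᵢ z / (z - μᵢ)`. Each summand has real part at least `1/2` as soon as
`|μᵢ| ≤ |z|`, and there are `deg p` summands.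
-/

open Polynomial

-- `2 Re (z / (z - μ)) - 1 = (|z|² - |μ|²) / |z - μ|²`.
theorem one_half_le_re_div_sub {z μ : ℂ} (hμ : ‖μ‖ ≤ ‖z‖) (hne : z ≠ μ) :
    1 / 2 ≤ (z / (z - μ)).re := by
  have hsq : Complex.normSq μ ≤ Complex.normSq z := by
    simpa only [← Complex.sq_norm] using pow_le_pow_left₀ (norm_nonneg μ) hμ 2
  rw [Complex.div_re, ← add_div, le_div_iff₀ (Complex.normSq_pos.mpr (sub_ne_zero.mpr hne))]
  simp only [Complex.normSq_apply, Complex.sub_re, Complex.sub_im] at hsq ⊢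
  nlinarith

theorem Polynomial.Splits.mul_eval_derivative_div_eval {K : Type*} [Field K] {p : K[X]}
    (hp : p.Splits) {z : K} (hpz : p.eval z ≠ 0) :
    z * p.derivative.eval z / p.eval z = (p.roots.map fun μ ↦ z / (z - μ)).sum := by
  rw [mul_div_assoc, hp.eval_derivative_div_eval_of_ne_zero hpz, ← Multiset.sum_map_mul_left]
  simp only [mul_one_div]

theorem natDegree_div_two_le_re_mul_eval_derivative_div_eval {p : ℂ[X]} {z : ℂ}
    (hroots : ∀ μ ∈ p.roots, ‖μ‖ ≤ ‖z‖) (hpz : p.eval z ≠ 0) :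
    (p.natDegree : ℝ) / 2 ≤ (z * p.derivative.eval z / p.eval z).re := by
  have hp := IsAlgClosed.splits p
  have hre : (z * p.derivative.eval z / p.eval z).re =
      (p.roots.map fun μ ↦ (z / (z - μ)).re).sum := by
    rw [hp.mul_eval_derivative_div_eval hpz]
    exact (map_multiset_sum Complex.reAddGroupHom _).trans (by rw [Multiset.map_map]; rfl)
  have hbound : ∀ x ∈ p.roots.map fun μ ↦ (z / (z - μ)).re, 1 / 2 ≤ x := by
    simp only [Multiset.mem_map, forall_exists_index, and_imp, forall_apply_eq_imp_iff₂]
    exact fun μ hμ ↦ one_half_le_re_div_sub (hroots μ hμ)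
      fun h ↦ hpz (h ▸ (mem_roots'.mp hμ).2)
  calc (p.natDegree : ℝ) / 2
      = Multiset.card (p.roots.map fun μ ↦ (z / (z - μ)).re) • (1 / 2 : ℝ) := by
        rw [Multiset.card_map, ← hp.natDegree_eq_card_roots, nsmul_eq_mul]
        ring
    _ ≤ _ := hre ▸ Multiset.card_nsmul_le_sum hbound

theorem stmt_5_general (n : ℕ) (p : Polynomial ℂ) (hdeg : p.natDegree = n)
    (hroots : ∀ μ ∈ p.roots, ‖μ‖ ≤ 1)
    (z : ℂ) (hz : ‖z‖ = 1) (hpz : p.eval z ≠ 0) :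
    (n : ℝ) / 2 ≤ (z * (Polynomial.derivative p).eval z / p.eval z).re :=
  hdeg ▸ natDegree_div_two_le_re_mul_eval_derivative_div_eval (hz ▸ hroots) hpz

theorem stmt_5 (n : ℕ) (hn : 1 ≤ n) (p : Polynomial ℂ) (hdeg : p.natDegree = n)
    (hroots : ∀ μ ∈ p.roots, ‖μ‖ ≤ 1)
    (z : ℂ) (hz : ‖z‖ = 1) (hpz : p.eval z ≠ 0) :
    (n : ℝ) / 2 ≤ (z * (Polynomial.derivative p).eval z / p.eval z).re :=
  stmt_5_general n p hdeg hroots z hz hpz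
end

section
/- For complex s with Re(s) > 1, (1 - 2^{-s})·ζ'(s) + 2^{-s}·log(2)·ζ(s) = -∑_{n=1}^∞ log(2n+1)/(2n+1)^s. Consequently |(1 - 2^{-s})·ζ'(s)| ≥ 2^{-Re(s)}·log(2)·|ζ(s)| - ∑_{n=1}^∞ log(2n+1)/(2n+1)^{Re(s)}. -/
/-!
The Dirichlet series of the odd numbers is the `L`-function of the trivial character mod `2`,
which equals `(1 - 2^{-s}) ζ(s)` away from `s = 1`; differentiating the series termwise for
`Re s > 1` gives the identity (its `n = 0` term, `log 1`, vanishes). The inequality is the triangle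
inequality applied to the identity.
-/

open Complex LSeries DirichletCharacter Filter Topology
open scoped LSeries.notation

lemma norm_tsum_le_tsum_norm_of_finiteDimensional {ι E : Type*} [NormedAddCommGroup E]
    [NormedSpace ℝ E] [FiniteDimensional ℝ E] (f : ι → E) : ‖∑' i, f i‖ ≤ ∑' i, ‖f i‖ := by
  by_cases hf : Summable fun i ↦ ‖f i‖
  · exact norm_tsum_le_tsum_norm hf
  · rw [tsum_eq_zero_of_not_summable hf, tsum_eq_zero_of_not_summable (mt summable_norm_iff.2 hf),
      norm_zero]

lemma Complex.norm_log_div_cpow {x : ℝ} (hx : 1 ≤ x) (s : ℂ) :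
    ‖(Real.log x : ℂ) / (x : ℂ) ^ s‖ = Real.log x / x ^ s.re := by
  rw [norm_div, norm_cpow_eq_rpow_re_of_pos (by linarith), norm_real,
    Real.norm_of_nonneg (Real.log_nonneg hx)]

lemma hasDerivAt_one_sub_cpow_neg_mul_riemannZeta {a s : ℂ} (ha : a ≠ 0) (hs : s ≠ 1) :
    HasDerivAt (fun z ↦ (1 - a ^ (-z)) * riemannZeta z)
      (a ^ (-s) * log a * riemannZeta s + (1 - a ^ (-s)) * deriv riemannZeta s) s := by
  have h := ((hasDerivAt_neg s).const_cpow (c := a) (.inl ha)).const_sub 1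
  exact (h.mul (differentiableAt_riemannZeta hs).hasDerivAt).congr_deriv (by ring)

lemma ZMod.isUnit_natCast_two_iff (n : ℕ) : IsUnit (n : ZMod 2) ↔ Odd n := by
  rw [ZMod.isUnit_iff_coprime, Nat.coprime_two_right]

section Prime

variable {p : ℕ} [Fact p.Prime] {s : ℂ}

lemma LFunctionTrivChar_prime_eq_mul_riemannZeta (hs : s ≠ 1) :
    LFunctionTrivChar p s = (1 - (p : ℂ) ^ (-s)) * riemannZeta s := by
  simpa [(Fact.out : p.Prime).primeFactors] using LFunctionTrivChar_eq_mul_riemannZeta (N := p) hs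

lemma one_sub_prime_cpow_mul_deriv_riemannZeta_add_eq_neg_LSeries_logMul (hs : 1 < s.re) :
    (1 - (p : ℂ) ^ (-s)) * deriv riemannZeta s + (p : ℂ) ^ (-s) * Real.log p * riemannZeta s =
      -LSeries (logMul ↗(1 : DirichletCharacter ℂ p)) s := by
  have hs1 : s ≠ 1 := by rintro rfl; simp at hs
  have hL : LFunctionTrivChar p =ᶠ[𝓝 s] fun z ↦ (1 - (p : ℂ) ^ (-z)) * riemannZeta z :=
    (eventually_ne_nhds hs1).mono fun _ ↦ LFunctionTrivChar_prime_eq_mul_riemannZeta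
  have habs : abscissaOfAbsConv ↗(1 : DirichletCharacter ℂ p) < s.re := by
    rwa [absicssaOfAbsConv_eq_one (NeZero.ne p), ← EReal.coe_one, EReal.coe_lt_coe_iff]
  rw [← LSeries_deriv habs, ← deriv_LFunction_eq_deriv_LSeries _ hs, hL.deriv_eq,
    (hasDerivAt_one_sub_cpow_neg_mul_riemannZeta (NeZero.ne _) hs1).deriv,
    ofReal_log p.cast_nonneg, ofReal_natCast]
  ring

end Prime

lemma term_logMul_trivChar_two (s : ℂ) (n : ℕ) :
    term (logMul ↗(1 : DirichletCharacter ℂ 2)) s (2 * n + 3) =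
      (Real.log (2 * n + 3) : ℂ) / (2 * n + 3) ^ s := by
  have hodd : IsUnit ((2 * n + 3 : ℕ) : ZMod 2) :=
    (ZMod.isUnit_natCast_two_iff _).2 ⟨n + 1, by ring⟩
  rw [term_of_ne_zero (by omega), logMul, MulChar.one_apply hodd, mul_one, ← natCast_log]
  push_cast
  rfl

lemma support_term_logMul_trivChar_two (s : ℂ) :
    Function.support (term (logMul ↗(1 : DirichletCharacter ℂ 2)) s) ⊆
      Set.range fun n : ℕ ↦ 2 * n + 3 := by
  intro m hm
  have hm0 : m ≠ 0 := by rintro rfl; exact hm (term_zero ..)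
  rw [Function.mem_support, term_of_ne_zero hm0, logMul] at hm
  obtain ⟨k, rfl⟩ : Odd m := (ZMod.isUnit_natCast_two_iff m).1 <| by
    by_contra h
    exact hm (by rw [MulChar.map_nonunit _ h]; simp)
  obtain _ | k := k
  · simp at hm
  · exact ⟨k, by ring⟩

lemma LSeries_logMul_trivChar_two (s : ℂ) :
    LSeries (logMul ↗(1 : DirichletCharacter ℂ 2)) s =
      ∑' n : ℕ, (Real.log (2 * n + 3) : ℂ) / (2 * n + 3) ^ s := by
  have hinj : Function.Injective fun n : ℕ ↦ 2 * n + 3 := fun a b h ↦ by simpa using h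
  rw [LSeries, ← hinj.tsum_eq (support_term_logMul_trivChar_two s)]
  exact tsum_congr (term_logMul_trivChar_two s)

lemma norm_tsum_log_div_cpow_odd_le (s : ℂ) :
    ‖∑' n : ℕ, (Real.log (2 * n + 3) : ℂ) / (2 * n + 3) ^ s‖ ≤
      ∑' n : ℕ, Real.log (2 * n + 3) / (2 * n + 3) ^ s.re := by
  refine (norm_tsum_le_tsum_norm_of_finiteDimensional _).trans_eq (tsum_congr fun n ↦ ?_)
  exact_mod_cast norm_log_div_cpow (x := 2 * n + 3) (by linarith [n.cast_nonneg (α := ℝ)]) s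

theorem stmt_15 (s : ℂ) (hs : 1 < s.re) :
    (1 - (2 : ℂ) ^ (-s)) * deriv riemannZeta s +
        (2 : ℂ) ^ (-s) * Real.log 2 * riemannZeta s =
      -∑' n : ℕ, (Real.log (2 * (n : ℝ) + 3) : ℂ) / ((2 * (n : ℂ) + 3) ^ s) ∧
    ‖(1 - (2 : ℂ) ^ (-s)) * deriv riemannZeta s‖ ≥
      (2 : ℝ) ^ (-s.re) * Real.log 2 * ‖riemannZeta s‖ -
        ∑' n : ℕ, Real.log (2 * (n : ℝ) + 3) / (2 * (n : ℝ) + 3) ^ s.re := by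
  have key := one_sub_prime_cpow_mul_deriv_riemannZeta_add_eq_neg_LSeries_logMul (p := 2) hs
  rw [LSeries_logMul_trivChar_two] at key
  push_cast at key
  refine ⟨key, ?_⟩
  have hnorm : ‖(2 : ℂ) ^ (-s) * Real.log 2 * riemannZeta s‖ =
      (2 : ℝ) ^ (-s.re) * Real.log 2 * ‖riemannZeta s‖ := by
    rw [norm_mul, norm_mul, norm_real, Real.norm_of_nonneg (Real.log_nonneg one_le_two),
      ← ofReal_ofNat, norm_cpow_eq_rpow_re_of_pos two_pos, neg_re]
  have htri := norm_sub_le ((1 - (2 : ℂ) ^ (-s)) * deriv riemannZeta s +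
    (2 : ℂ) ^ (-s) * Real.log 2 * riemannZeta s) ((1 - (2 : ℂ) ^ (-s)) * deriv riemannZeta s)
  rw [add_sub_cancel_left, key, norm_neg, hnorm] at htri
  linarith [norm_tsum_log_div_cpow_odd_le s]
end

section
/- Let A be an n×n unitary matrix (n ≥ 2) with distinct eigenvalues, p(z) = det(A - zI), and define F(θ) = Re(e^{iθ}·η'(e^{iθ})/η(e^{iθ})) where η(z) = z·(-z)^{-n/2}·det(A)^{-1/2}·p'(z) (with a fixed branch). Then F(θ) = 1 - n/2 + ∑_{j=1}^{n-1} Re(1/(1 - e^{-iθ}·μ'_j)), where μ'_j are the roots of p', and F(θ) ≥ 1/2 for all θ at which F is defined. -/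
open Polynomial Matrix Complex

/-!
Logarithmic differentiation of `η = z · g · p'` gives `z η'/η = 1 + z g'/g + ∑ z / (z - μ'ⱼ)`,
and differentiating `g² (-z)ⁿ det A = 1` gives Euler's relation `z g'/g = -n/2`.
The eigenvalues of a unitary matrix lie on the unit circle, so by Gauss–Lucas every `μ'ⱼ` lies
in the closed unit disk. For `‖u‖ ≤ 1`, `u ≠ 1` one has `Re (1 / (1 - u)) ≥ 1/2`, and summing
over the `n - 1` roots of `p'` gives `F(θ) ≥ 1 - n/2 + (n - 1)/2 = 1/2`.
-/

theorem Polynomial.mem_of_mem_roots_derivative {P : ℂ[X]} {s : Set ℂ} (hs : Convex ℝ s)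
    (hP : ∀ z ∈ P.roots, z ∈ s) {μ : ℂ} (hμ : μ ∈ P.derivative.roots) : μ ∈ s := by
  have hdeg : 0 < P.degree := by
    by_contra! h
    exact ne_zero_of_mem_roots hμ
      (derivative_of_natDegree_zero (natDegree_eq_zero_iff_degree_le_zero.2 h))
  refine convexHull_min (fun z hz => hP z ?_) hs
    (rootSet_derivative_subset_convexHull_rootSet hdeg ?_)
  · simpa [rootSet_def] using hz
  · simpa [rootSet_def] using hμ

section Charpoly

variable {ι : Type*} [Fintype ι] [DecidableEq ι]

theorem Matrix.det_sub_smul_one {R : Type*} [CommRing R] (A : Matrix ι ι R) (z : R) :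
    (A - z • (1 : Matrix ι ι R)).det = (-1) ^ Fintype.card ι * A.charpoly.eval z := by
  rw [eval_charpoly, ← det_neg, neg_sub, scalar_apply, smul_one_eq_diagonal]

theorem Matrix.eq_C_mul_charpoly_of_eval_eq_det {R : Type*} [CommRing R] [IsDomain R]
    [Infinite R] (A : Matrix ι ι R) {p : R[X]}
    (hp : ∀ z, p.eval z = (A - z • (1 : Matrix ι ι R)).det) :
    p = C ((-1) ^ Fintype.card ι) * A.charpoly :=
  Polynomial.funext fun z => by rw [hp, det_sub_smul_one, eval_mul, eval_C]

theorem Matrix.card_roots_derivative_of_eval_eq_det (A : Matrix ι ι ℂ) {p : ℂ[X]}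
    (hp : ∀ z, p.eval z = (A - z • (1 : Matrix ι ι ℂ)).det) :
    p.derivative.roots.card = Fintype.card ι - 1 := by
  rw [IsAlgClosed.card_roots_eq_natDegree, natDegree_derivative,
    A.eq_C_mul_charpoly_of_eval_eq_det hp, natDegree_C_mul (by simp), charpoly_natDegree_eq_dim]

open scoped Matrix.Norms.L2Operator in
theorem Matrix.norm_eq_one_of_mem_roots_charpoly {A : Matrix ι ι ℂ} (hA : A ∈ unitaryGroup ι ℂ)
    {r : ℂ} (hr : r ∈ A.charpoly.roots) : ‖r‖ = 1 :=
  spectrum.norm_eq_one_of_unitary hA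
    (mem_spectrum_iff_isRoot_charpoly.2 (isRoot_of_mem_roots hr))

theorem Matrix.norm_le_one_of_mem_roots_derivative {A : Matrix ι ι ℂ}
    (hA : A ∈ unitaryGroup ι ℂ) {p : ℂ[X]}
    (hp : ∀ z, p.eval z = (A - z • (1 : Matrix ι ι ℂ)).det) {μ : ℂ}
    (hμ : μ ∈ p.derivative.roots) : ‖μ‖ ≤ 1 := by
  refine mem_closedBall_zero_iff.1
    (mem_of_mem_roots_derivative (convex_closedBall 0 1) (fun z hz => ?_) hμ)
  rw [A.eq_C_mul_charpoly_of_eval_eq_det hp, roots_C_mul _ (by simp)] at hz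
  exact mem_closedBall_zero_iff.2 (norm_eq_one_of_mem_roots_charpoly hA hz).le

end Charpoly

theorem Polynomial.logDeriv_eval {P : ℂ[X]} {w : ℂ} (hw : P.eval w ≠ 0) :
    logDeriv (fun z => P.eval z) w = (P.roots.map fun μ => 1 / (w - μ)).sum := by
  rw [logDeriv_apply, Polynomial.deriv,
    (IsAlgClosed.splits P).eval_derivative_div_eval_of_ne_zero hw]

theorem logDeriv_id_mul_mul_eval {g : ℂ → ℂ} {P : ℂ[X]} {w : ℂ} (hw : w ≠ 0) (hgw : g w ≠ 0)
    (hg : DifferentiableAt ℂ g w) (hP : P.eval w ≠ 0) :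
    logDeriv (fun z => z * g z * P.eval z) w =
      1 / w + logDeriv g w + (P.roots.map fun μ => 1 / (w - μ)).sum := by
  rw [logDeriv_mul (f := fun z => z * g z) w (mul_ne_zero hw hgw) hP
      (differentiableAt_id.mul hg) P.differentiableAt,
    logDeriv_mul (f := fun z => z) w hw hgw differentiableAt_fun_id hg, logDeriv_id',
    logDeriv_eval hP]

section Branch

variable {g : ℂ → ℂ} {U : Set ℂ} {n : ℕ} {c : ℂ}

theorem ne_zero_of_sq_mul_neg_pow_eq_one (h : ∀ z ∈ U, g z ^ 2 * ((-z) ^ n * c) = 1) {w : ℂ}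
    (hw : w ∈ U) : g w * ((-w) ^ n * c) ≠ 0 := by
  intro h0
  have := h w hw
  rw [sq, mul_assoc, h0, mul_zero] at this
  exact zero_ne_one this

theorem mul_logDeriv_eq_of_sq_mul_neg_pow_eq_one (hU : IsOpen U) (hg : DifferentiableOn ℂ g U)
    (h : ∀ z ∈ U, g z ^ 2 * ((-z) ^ n * c) = 1) {w : ℂ} (hw : w ∈ U) :
    w * logDeriv g w = -(n / 2) := by
  have hgw : HasDerivAt g (deriv g w) w := (hg.differentiableAt (hU.mem_nhds hw)).hasDerivAt
  have hderiv := (hgw.pow 2).mul ((((hasDerivAt_id w).neg).pow n).mul_const c)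
  have hconst : HasDerivAt (fun z => g z ^ 2 * ((-z) ^ n * c)) 0 w :=
    (hasDerivAt_const w 1).congr_of_eventuallyEq
      (Filter.eventuallyEq_of_mem (hU.mem_nhds hw) h)
  have hzero := hderiv.unique hconst
  simp only [Pi.pow_apply, Pi.neg_apply, id, Nat.cast_ofNat, pow_one, Nat.add_one_sub_one]
    at hzero
  have hpow : w * ((n : ℂ) * (-w) ^ (n - 1) * -1) = n * (-w) ^ n := by
    cases n <;> simp [pow_succ]; ring
  have hne := ne_zero_of_sq_mul_neg_pow_eq_one h hw
  have key : g w * ((-w) ^ n * c) * (2 * (w * deriv g w) + n * g w) = 0 := by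
    linear_combination w * hzero - (g w ^ 2 * c) * hpow
  rw [logDeriv_apply, mul_div_assoc', div_eq_iff (left_ne_zero_of_mul hne)]
  linear_combination (mul_eq_zero.1 key).resolve_left hne / 2

theorem mul_deriv_div_eq_one_sub_half_add_sum (hU : IsOpen U) (hg : DifferentiableOn ℂ g U)
    (h : ∀ z ∈ U, g z ^ 2 * ((-z) ^ n * c) = 1) {P : ℂ[X]} {η : ℂ → ℂ}
    (hη : ∀ z, η z = z * g z * P.eval z) {w : ℂ} (hw : w ∈ U) (hw0 : w ≠ 0)
    (hP : P.eval w ≠ 0) :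
    w * deriv η w / η w = 1 - n / 2 + (P.roots.map fun μ => 1 / (1 - w⁻¹ * μ)).sum := by
  obtain rfl : η = fun z => z * g z * P.eval z := funext hη
  have hgw : g w ≠ 0 := left_ne_zero_of_mul (ne_zero_of_sq_mul_neg_pow_eq_one h hw)
  rw [mul_div_assoc, ← logDeriv_apply,
    logDeriv_id_mul_mul_eval hw0 hgw (hg.differentiableAt (hU.mem_nhds hw)) hP, mul_add,
    mul_add, mul_logDeriv_eq_of_sq_mul_neg_pow_eq_one hU hg h hw, ← Multiset.sum_map_mul_left,
    mul_one_div_cancel hw0]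
  congr 2
  refine Multiset.map_congr rfl fun μ _ => ?_
  rw [show 1 - w⁻¹ * μ = (w - μ) / w by field_simp, one_div_div, mul_one_div]

end Branch

theorem Complex.re_multiset_sum_map {α : Type*} (s : Multiset α) (f : α → ℂ) :
    (s.map f).sum.re = (s.map fun a => (f a).re).sum := by
  simpa using map_multiset_sum reAddGroupHom (s.map f)

theorem Complex.one_half_le_re_one_div_one_sub {u : ℂ} (hu : ‖u‖ ≤ 1) (hu1 : u ≠ 1) :
    1 / 2 ≤ (1 / (1 - u)).re := by
  have hpos : 0 < normSq (1 - u) := normSq_pos.2 (sub_ne_zero.2 hu1.symm)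
  have hnormSq : normSq u ≤ 1 := by rw [normSq_eq_norm_sq]; nlinarith [norm_nonneg u]
  rw [one_div (1 - u), inv_re, le_div_iff₀ hpos]
  simp only [normSq_apply, sub_re, sub_im, one_re, one_im] at hpos hnormSq ⊢
  nlinarith

theorem Complex.card_div_two_le_sum_re_one_div_one_sub {α : Type*} {s : Multiset α}
    {f : α → ℂ} (hf : ∀ a ∈ s, ‖f a‖ ≤ 1 ∧ f a ≠ 1) :
    (s.card : ℝ) / 2 ≤ (s.map fun a => (1 / (1 - f a)).re).sum := by
  have := Multiset.card_nsmul_le_sum (s := s.map fun a => (1 / (1 - f a)).re) (a := 1 / 2) <| by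
    simp only [Multiset.mem_map]
    rintro _ ⟨a, ha, rfl⟩
    exact one_half_le_re_one_div_one_sub (hf a ha).1 (hf a ha).2
  rwa [Multiset.card_map, nsmul_eq_mul, mul_one_div] at this

theorem stmt_18_general (n : ℕ) (A : Matrix (Fin n) (Fin n) ℂ)
    (hA : A * Aᴴ = 1) (p : Polynomial ℂ)
    (hp : ∀ z : ℂ, p.eval z = Matrix.det (A - z • (1 : Matrix (Fin n) (Fin n) ℂ)))
    (g : ℂ → ℂ) (U : Set ℂ) (hU : IsOpen U)
    (hg : DifferentiableOn ℂ g U)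
    (hbranch : ∀ z ∈ U, g z ^ 2 * ((-z) ^ n * Matrix.det A) = 1)
    (η : ℂ → ℂ)
    (hη : ∀ z : ℂ, η z = z * g z * (Polynomial.derivative p).eval z)
    (θ : ℝ) (hmem : Complex.exp (θ * Complex.I) ∈ U)
    (hne : (Polynomial.derivative p).eval (Complex.exp (θ * Complex.I)) ≠ 0) :
    (Complex.exp (θ * Complex.I) * deriv η (Complex.exp (θ * Complex.I)) /
        η (Complex.exp (θ * Complex.I))).re =
      1 - (n : ℝ) / 2 +
        (((Polynomial.derivative p).roots.map
            (fun μ => (1 / (1 - Complex.exp (-θ * Complex.I) * μ)).re)).sum) ∧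
    (1 : ℝ) / 2 ≤
      (Complex.exp (θ * Complex.I) * deriv η (Complex.exp (θ * Complex.I)) /
        η (Complex.exp (θ * Complex.I))).re := by
  have hexp : exp (-θ * I) = (exp (θ * I))⁻¹ := by rw [neg_mul, exp_neg]
  have hF := mul_deriv_div_eq_one_sub_half_add_sum hU hg hbranch hη hmem (exp_ne_zero _) hne
  rw [← hexp] at hF
  have hre := congrArg re hF
  simp only [add_re, sub_re, one_re, div_ofNat_re, natCast_re, re_multiset_sum_map] at hre
  have hterm (μ : ℂ) (hμ : μ ∈ p.derivative.roots) :
      ‖exp (-θ * I) * μ‖ ≤ 1 ∧ exp (-θ * I) * μ ≠ 1 := by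
    refine ⟨?_, ?_⟩
    · rw [norm_mul, hexp, norm_inv, norm_exp_ofReal_mul_I, inv_one, one_mul]
      exact norm_le_one_of_mem_roots_derivative (mem_unitaryGroup_iff.2 hA) hp hμ
    · rw [hexp, Ne, inv_mul_eq_one₀ (exp_ne_zero _)]
      rintro rfl
      exact hne (isRoot_of_mem_roots hμ)
  have hsum := card_div_two_le_sum_re_one_div_one_sub (f := fun μ => exp (-θ * I) * μ) hterm
  rw [card_roots_derivative_of_eval_eq_det A hp, Fintype.card_fin] at hsum
  have hn : (n : ℝ) - 1 ≤ ((n - 1 : ℕ) : ℝ) := by cases n <;> simp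
  refine ⟨hre, ?_⟩
  rw [hre]
  linarith

theorem stmt_18 (n : ℕ) (hn : 2 ≤ n) (A : Matrix (Fin n) (Fin n) ℂ)
    (hA : A * Aᴴ = 1) (p : Polynomial ℂ)
    (hp : ∀ z : ℂ, p.eval z = Matrix.det (A - z • (1 : Matrix (Fin n) (Fin n) ℂ)))
    (hdist : p.roots.Nodup)
    (g : ℂ → ℂ) (U : Set ℂ) (hU : IsOpen U)
    (hg : DifferentiableOn ℂ g U)
    (hbranch : ∀ z ∈ U, g z ^ 2 * ((-z) ^ n * Matrix.det A) = 1)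
    (η : ℂ → ℂ)
    (hη : ∀ z : ℂ, η z = z * g z * (Polynomial.derivative p).eval z)
    (θ : ℝ) (hmem : Complex.exp (θ * Complex.I) ∈ U)
    (hne : (Polynomial.derivative p).eval (Complex.exp (θ * Complex.I)) ≠ 0) :
    (Complex.exp (θ * Complex.I) * deriv η (Complex.exp (θ * Complex.I)) /
        η (Complex.exp (θ * Complex.I))).re =
      1 - (n : ℝ) / 2 +
        (((Polynomial.derivative p).roots.map
            (fun μ => (1 / (1 - Complex.exp (-θ * Complex.I) * μ)).re)).sum) ∧
    (1 : ℝ) / 2 ≤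
      (Complex.exp (θ * Complex.I) * deriv η (Complex.exp (θ * Complex.I)) /
        η (Complex.exp (θ * Complex.I))).re :=
  stmt_18_general n A hA p hp g U hU hg hbranch η hη θ hmem hne
end
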